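/- arXiv:2407.18398 — 2 statements merged into one kernel-verified Lean document; each statement's English description precedes it below -/
import Mathlib

section
/- Let p = 2, q = 2^m, and let C_{t_1,...,t_s} be the binary cyclic code of length n = q-1 defined by the conditions c(γ^{t_j}) = 0 for all j, where γ is a primitive element of F_q. Then C contains a codeword of weight 2 if and only if gcd(q-1, t_1, t_2, ..., t_s) > 1. -/
/-!
A binary word of weight two is `x^a + x^b` with `a ≠ b`, and in characteristic two it lies in
the code iff `γ^(t_j a) = γ^(t_j b)` for every `j`. Since `γ` has order `n = q - 1`, this says
`n ∣ t_j (b - a)` for all `j`, i.e. `n ∣ gcd(t) · d` for some `0 < d < n`, and such a `d`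
exists (namely `n / gcd(n, gcd t)`) exactly when `gcd(n, gcd t) > 1`.
-/

open Finset

section WeightTwo

variable {ι κ F : Type*} [Fintype ι] [Ring F] [Algebra (ZMod 2) F]

theorem sum_algebraMap_zmod_two_mul (c : ι → ZMod 2) (f : ι → F) :
    ∑ i, algebraMap (ZMod 2) F (c i) * f i = ∑ i ∈ univ.filter (c · ≠ 0), f i := by
  rw [sum_filter]
  refine sum_congr rfl fun i _ => ?_
  rcases (by decide : ∀ x : ZMod 2, x = 0 ∨ x = 1) (c i) with h | h <;> simp [h]

theorem exists_filter_ne_zero_eq [DecidableEq ι] (S : Finset ι) :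
    ∃ c : ι → ZMod 2, univ.filter (c · ≠ 0) = S :=
  ⟨fun i => if i ∈ S then 1 else 0, by ext i; by_cases h : i ∈ S <;> simp [h]⟩

theorem exists_weight_two_iff [DecidableEq ι] [CharP F 2] (v : κ → ι → F) :
    (∃ c : ι → ZMod 2, (∀ j, ∑ i, algebraMap (ZMod 2) F (c i) * v j i = 0) ∧
        #(univ.filter (c · ≠ 0)) = 2) ↔
      ∃ a b, a ≠ b ∧ ∀ j, v j a = v j b := by
  simp_rw [sum_algebraMap_zmod_two_mul]
  constructor
  · rintro ⟨c, hc, hcard⟩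
    obtain ⟨a, b, hab, hS⟩ := card_eq_two.mp hcard
    refine ⟨a, b, hab, fun j => ?_⟩
    have := hc j
    rwa [hS, sum_pair hab, CharTwo.add_eq_zero] at this
  · rintro ⟨a, b, hab, hv⟩
    obtain ⟨c, hc⟩ := exists_filter_ne_zero_eq {a, b}
    refine ⟨c, fun j => ?_, by rw [hc, card_pair hab]⟩
    rw [hc, sum_pair hab, hv, CharTwo.add_self_eq_zero]

end WeightTwo

theorem Nat.exists_pos_lt_dvd_mul_iff_one_lt_gcd {n g : ℕ} (hn : 0 < n) :
    (∃ d, 0 < d ∧ d < n ∧ n ∣ g * d) ↔ 1 < n.gcd g := by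
  constructor
  · rintro ⟨d, hd0, hdn, hdvd⟩
    by_contra! hle
    have hcop : n.Coprime g := by
      have := Nat.gcd_pos_of_pos_left g hn
      unfold Nat.Coprime; omega
    exact absurd (Nat.le_of_dvd hd0 (hcop.dvd_of_dvd_mul_left hdvd)) (by omega)
  · intro hgcd
    have hdvd := Nat.gcd_dvd_left n g
    refine ⟨n / n.gcd g, Nat.div_pos (Nat.le_of_dvd hn hdvd) (by omega),
      Nat.div_lt_self hn hgcd, ?_⟩
    rw [← Nat.mul_div_assoc _ hdvd, Nat.mul_div_right_comm (Nat.gcd_dvd_right n g)]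
    exact dvd_mul_left n _

theorem Finset.dvd_gcd_mul_iff {ι : Type*} (s : Finset ι) (f : ι → ℕ) (n d : ℕ) :
    n ∣ s.gcd f * d ↔ ∀ i ∈ s, n ∣ f i * d := by
  rw [← normalize_eq d, ← gcd_mul_right, dvd_gcd_iff, normalize_eq]

theorem Nat.exists_ne_forall_mul_modEq_iff {ι : Type*} [Fintype ι] {n : ℕ} (hn : 0 < n)
    (t : ι → ℕ) :
    (∃ a b : Fin n, a ≠ b ∧ ∀ j, t j * a ≡ t j * b [MOD n]) ↔ 1 < n.gcd (univ.gcd t) := by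
  rw [← Nat.exists_pos_lt_dvd_mul_iff_one_lt_gcd hn]
  simp_rw [dvd_gcd_mul_iff, mem_univ, true_implies]
  constructor
  · rintro ⟨a, b, hab, hmod⟩
    wlog hlt : a < b generalizing a b
    · exact this b a hab.symm (fun j => (hmod j).symm) (lt_of_le_of_ne (not_lt.mp hlt) hab.symm)
    refine ⟨b - a, by omega, by omega, fun j => ?_⟩
    rw [Nat.mul_sub, ← Nat.modEq_iff_dvd' (Nat.mul_le_mul_left _ hlt.le)]
    exact hmod j
  · rintro ⟨d, hd0, hdn, hdvd⟩
    refine ⟨⟨0, hn⟩, ⟨d, hdn⟩, Fin.ne_of_val_ne hd0.ne, fun j => ?_⟩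
    rw [Fin.val_mk, mul_zero]
    exact (Nat.modEq_zero_iff_dvd.mpr (hdvd j)).symm

theorem FiniteField.orderOf_eq_card_sub_one_of_forall_pow_eq {F : Type*} [Field F] [Fintype F]
    (hF : 2 < Fintype.card F) {γ : F} (hγ : ∀ x : F, x ≠ 0 → ∃ k : ℕ, γ ^ k = x) :
    orderOf γ = Fintype.card F - 1 := by
  classical
  have hγ0 : γ ≠ 0 := by
    rintro rfl
    have htrivial (w : Fˣ) : w = 1 := by
      obtain ⟨k, hk⟩ := hγ w w.ne_zero
      rcases k with _ | k
      · exact Units.ext (by simpa using hk.symm)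
      · exact absurd hk.symm (by simp)
    have := Fintype.card_le_one_iff.mpr fun u v => (htrivial u).trans (htrivial v).symm
    rw [Fintype.card_units] at this
    omega
  rw [← Units.val_mk0 hγ0, orderOf_units, orderOf_eq_card_of_forall_mem_zpowers,
    Nat.card_units, Nat.card_eq_fintype_card]
  intro x
  obtain ⟨k, hk⟩ := hγ x x.ne_zero
  exact mem_powers_iff_mem_zpowers.mp ⟨k, Units.ext (by simp [hk])⟩

theorem stmt_3_general (m s : ℕ)
    (F : Type) [Field F] [Fintype F] [Algebra (ZMod 2) F]
    (hcard : Fintype.card F = 2 ^ m)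
    (γ : F) (hγ : ∀ x : F, x ≠ 0 → ∃ k : ℕ, γ ^ k = x)
    (t : Fin (s + 1) → ℕ)
    (n : ℕ) (hn : n = 2 ^ m - 1) :
    (∃ c : Fin n → ZMod 2,
        (∀ j, ∑ i : Fin n, algebraMap (ZMod 2) F (c i) * γ ^ (t j * (i : ℕ)) = 0) ∧
        (Finset.univ.filter fun i => c i ≠ 0).card = 2) ↔
      1 < Nat.gcd (2 ^ m - 1) (Finset.univ.gcd t) := by
  have : CharP F 2 := charP_of_injective_algebraMap (algebraMap (ZMod 2) F).injective 2
  have hF : 1 < Fintype.card F := Fintype.one_lt_card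
  rw [exists_weight_two_iff fun j (i : Fin n) => γ ^ (t j * i), ← hn]
  obtain rfl | hn2 : n = 1 ∨ 2 ≤ n := by omega
  · simp
  have hord : orderOf γ = n := by
    rw [FiniteField.orderOf_eq_card_sub_one_of_forall_pow_eq (by omega) hγ]; omega
  have hγ_fin : IsOfFinOrder γ := orderOf_pos_iff.mp (by omega)
  simp_rw [hγ_fin.pow_eq_pow_iff_modEq, hord]
  exact Nat.exists_ne_forall_mul_modEq_iff (by omega) t

/-- a binary cyclic code `C_{t_1,…,t_s}` of length `2^m - 1` contains a
weight-2 codeword iff `gcd(2^m - 1, t_1, …, t_s) > 1`. -/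
theorem stmt_3 (m s : ℕ) (hm : 0 < m)
    (F : Type) [Field F] [Fintype F] [Algebra (ZMod 2) F]
    (hcard : Fintype.card F = 2 ^ m)
    (γ : F) (hγ : ∀ x : F, x ≠ 0 → ∃ k : ℕ, γ ^ k = x)
    (t : Fin (s + 1) → ℕ)
    (n : ℕ) (hn : n = 2 ^ m - 1) :
    (∃ c : Fin n → ZMod 2,
        (∀ j, ∑ i : Fin n, algebraMap (ZMod 2) F (c i) * γ ^ (t j * (i : ℕ)) = 0) ∧
        (Finset.univ.filter fun i => c i ≠ 0).card = 2) ↔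
      1 < Nat.gcd (2 ^ m - 1) (Finset.univ.gcd t) :=
  stmt_3_general m s F hcard γ hγ t n hn
end

section
/- Let p be an odd prime, m a positive integer, g a divisor of m, and let t_1, ..., t_s be integers that all lie in the p-cyclotomic coset K_g(t) of some t ≢ 0 (mod p^g - 1), but do not all lie in a single p-cyclotomic coset modulo p^m - 1. Then the cyclic code C_{t_1,...,t_s} of length p^m - 1 over F_p contains a codeword of Hamming weight at most 3 (in fact of weight exactly 3 or 2), so its minimum distance is at most 3. -/
/-!
All `t j` are congruent to `t0` modulo `p - 1`, because `p - 1 ∣ p ^ g - 1` and `p ≡ 1`.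
With `e = (p ^ m - 1) / (p - 1)`, the element `γ ^ e` has order dividing `p - 1`, so
`γ ^ (e * t j) = (γ ^ e) ^ t0` for every `j`; this is a `(p - 1)`-th root of unity, hence a
nonzero element `a` of the prime field, and `a - X ^ e` is a codeword of weight `2`
(a genuine one since `p ≥ 3` gives `e < p ^ m - 1`).
-/

open Finset

lemma Nat.ModEq.of_mul_pow_mod_pow_sub_one {p g t t₀ k : ℕ} (hp : 0 < p)
    (h : t ≡ t₀ * p ^ k [MOD p ^ g - 1]) : t ≡ t₀ [MOD p - 1] := by
  have hpk : p ^ k ≡ 1 [MOD p - 1] := by simpa using (Nat.modEq_sub hp).pow k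
  simpa using (h.of_dvd (Nat.sub_one_dvd_pow_sub_one p g)).trans (hpk.mul_left t₀)

lemma ne_zero_of_forall_exists_pow_eq {F : Type*} [Field F] [Fintype F]
    (hF : 2 < Fintype.card F) {γ : F} (hγ : ∀ x : F, x ≠ 0 → ∃ k : ℕ, γ ^ k = x) :
    γ ≠ 0 := by
  classical
  obtain ⟨x, -, hx⟩ := exists_mem_notMem_of_card_lt_card (s := ({0, 1} : Finset F)) (t := univ)
    (card_le_two.trans_lt (by simpa using hF))
  simp only [mem_insert, mem_singleton, not_or] at hx
  rintro rfl
  obtain ⟨_ | k, hk⟩ := hγ x hx.1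
  · exact hx.2 (by simpa using hk.symm)
  · exact hx.1 (by simpa using hk.symm)

lemma exists_weight_two_of_pow_eq {K L ι : Type*} [CommRing K] [Nontrivial K] [DecidableEq K]
    [Ring L] [Algebra K L] {n : ℕ} (γ : L) (t : ι → ℕ) (i : Fin n) (hi : (i : ℕ) ≠ 0)
    {a : K} (ha : a ≠ 0)
    (h : ∀ r, γ ^ (t r * i) = algebraMap K L a) :
    ∃ c : Fin n → K, (∀ r, ∑ k : Fin n, algebraMap K L (c k) * γ ^ (t r * k) = 0) ∧
      #{k | c k ≠ 0} = 2 := by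
  let i₀ : Fin n := ⟨0, by omega⟩
  have hne : i₀ ≠ i := fun h ↦ hi (congrArg Fin.val h).symm
  refine ⟨Pi.single i₀ a - Pi.single i 1, fun r ↦ ?_, ?_⟩
  · rw [Fintype.sum_eq_add i₀ i hne]
    · simp [hne, hne.symm, i₀, h]
    · intro k hk
      simp [hk.1, hk.2]
  · rw [card_eq_two]
    refine ⟨i₀, i, hne, ?_⟩
    ext k
    by_cases h₀ : k = i₀ <;> by_cases h₁ : k = i <;> simp_all

lemma exists_algebraMap_eq_of_pow_eq_self {p : ℕ} [Fact p.Prime] {F : Type*} [Field F]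
    [Algebra (ZMod p) F] {x : F} (hx : x ^ p = x) :
    ∃ a : ZMod p, algebraMap (ZMod p) F a = x := by
  have : CharP F p := (Algebra.charP_iff (ZMod p) F p).mp inferInstance
  rw [← Subfield.mem_bot_iff_pow_eq_self F p, ← ZMod.fieldRange_castHom_eq_bot p] at hx
  obtain ⟨a, ha⟩ := hx
  exact ⟨a, by rwa [RingHom.ext_zmod (algebraMap _ _) (ZMod.castHom dvd_rfl F)]⟩

theorem stmt_4_general (p m g s : ℕ) [Fact p.Prime] (hp : Odd p) (hm : 0 < m)
    (F : Type) [Field F] [Fintype F] [Algebra (ZMod p) F]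
    (hcard : Fintype.card F = p ^ m)
    (γ : F) (hγ : ∀ x : F, x ≠ 0 → ∃ k : ℕ, γ ^ k = x)
    (t : Fin (s + 1) → ℕ) (t0 : ℕ)
    (hin : ∀ j, ∃ k : ℕ, t j ≡ t0 * p ^ k [MOD p ^ g - 1])
    (n : ℕ) (hn : n = p ^ m - 1) :
    ∃ c : Fin n → ZMod p,
      (∀ j, ∑ i : Fin n, algebraMap (ZMod p) F (c i) * γ ^ (t j * (i : ℕ)) = 0) ∧
      ((Finset.univ.filter fun i => c i ≠ 0).card = 3 ∨
        (Finset.univ.filter fun i => c i ≠ 0).card = 2) := by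
  have hp3 : 3 ≤ p := by
    obtain ⟨r, rfl⟩ := hp
    have := (Fact.out : (2 * r + 1).Prime).two_le
    omega
  have hpm : p ≤ p ^ m := Nat.le_self_pow hm.ne' p
  set e := (p ^ m - 1) / (p - 1)
  have he : e * (p - 1) = p ^ m - 1 := Nat.div_mul_cancel (Nat.sub_one_dvd_pow_sub_one p m)
  have hγ0 : γ ≠ 0 := ne_zero_of_forall_exists_pow_eq (by omega) hγ
  have hy : (γ ^ e) ^ (p - 1) = 1 := by
    rw [← pow_mul, he, ← hcard, FiniteField.pow_card_sub_one_eq_one γ hγ0]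
  have hb : ((γ ^ e) ^ t0) ^ (p - 1) = 1 := by
    rw [← pow_mul, mul_comm, pow_mul, hy, one_pow]
  obtain ⟨a, ha⟩ := exists_algebraMap_eq_of_pow_eq_self
    (by simpa using pow_eq_pow_of_modEq (Nat.modEq_sub (by omega)) hb)
  have ha0 : a ≠ 0 := by
    rintro rfl
    exact pow_ne_zero _ (pow_ne_zero _ hγ0) (by simpa using ha.symm)
  subst hn
  have he0 : e ≠ 0 := (Nat.div_pos (by omega) (by omega)).ne'
  obtain ⟨c, hc, hwt⟩ := exists_weight_two_of_pow_eq (n := p ^ m - 1) γ t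
    ⟨e, Nat.div_lt_self (by omega) (by omega)⟩ he0 ha0 fun j ↦ by
      obtain ⟨k, hk⟩ := hin j
      rw [ha, mul_comm, pow_mul, pow_eq_pow_of_modEq (hk.of_mul_pow_mod_pow_sub_one (by omega)) hy]
  exact ⟨c, hc, .inr hwt⟩

/-- for odd `p`, if `t_1,…,t_s` all lie in `K_g(t)` for some `g ∣ m` and
`t ≢ 0 (mod p^g - 1)`, but do not all lie in one `p`-cyclotomic coset mod `p^m - 1`,
then `C_{t_1,…,t_s}` contains a codeword of weight `3` or `2` (so its minimum
distance is at most `3`). -/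
theorem stmt_4 (p m g s : ℕ) [Fact p.Prime] (hp : Odd p) (hm : 0 < m)
    (hg : 0 < g) (hgm : g ∣ m)
    (F : Type) [Field F] [Fintype F] [Algebra (ZMod p) F]
    (hcard : Fintype.card F = p ^ m)
    (γ : F) (hγ : ∀ x : F, x ≠ 0 → ∃ k : ℕ, γ ^ k = x)
    (t : Fin (s + 1) → ℕ) (t0 : ℕ) (ht0 : ¬ (p ^ g - 1) ∣ t0)
    (hin : ∀ j, ∃ k : ℕ, t j ≡ t0 * p ^ k [MOD p ^ g - 1])
    (hnot : ¬ ∃ u : ℕ, ∀ j, ∃ k : ℕ, t j ≡ u * p ^ k [MOD p ^ m - 1])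
    (n : ℕ) (hn : n = p ^ m - 1) :
    ∃ c : Fin n → ZMod p,
      (∀ j, ∑ i : Fin n, algebraMap (ZMod p) F (c i) * γ ^ (t j * (i : ℕ)) = 0) ∧
      ((Finset.univ.filter fun i => c i ≠ 0).card = 3 ∨
        (Finset.univ.filter fun i => c i ≠ 0).card = 2) :=
  stmt_4_general p m g s hp hm F hcard γ hγ t t0 hin n hn
end
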